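/- arXiv:1704.05655 — 2 statements merged into one kernel-verified Lean document; each statement's English description precedes it below -/
import Mathlib

section
/- (Theorem 1) The Pursuer has a winning strategy in a generalized Cops and Robbers game G if and only if there exists a Pursuer start position p_P ∈ I_P such that, for every q_E ∈ I_E(p_P), either (p_P, q_E) ∈ F or there exists w_P ∈ A_P(p_P, q_E) such that q_E ≼ w_P. -/
open Classical

/-- A generalized Cops and Robbers game on Pursuer positions `PP` and Evader positions `PE`.
`F` is the set of final positions, `I` the set of allowed start positions, and
`AP`/`AE` give the (nonempty) sets of allowed moves of the Pursuer/Evader from a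
non-final position (a move changes only that player's own coordinate). -/
structure GCR (PP PE : Type*) where
  F : PP → PE → Prop
  I : PP → PE → Prop
  AP : PP → PE → Set PP
  AE : PP → PE → Set PE
  I_nonempty : ∃ p q, I p q
  AP_nonempty : ∀ p q, ¬ F p q → (AP p q).Nonempty
  AE_nonempty : ∀ p q, ¬ F p q → (AE p q).Nonempty

namespace GCR

variable {PP PE : Type*}

/-- The Pursuer's allowed start positions `I_P`. -/
def IP (G : GCR PP PE) (p : PP) : Prop := ∃ q, G.I p q

/-- The Evader's allowed start positions `I_E(p)` against the Pursuer start `p`. -/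
def IE (G : GCR PP PE) (p : PP) (q : PE) : Prop := G.I p q

/-- The sequence of relations `≼_i` from Evader positions to Pursuer positions:
`q ≼_0 p` iff `(p,q) ∈ F`; and for `i ≥ 1`, `q ≼_i p` iff `(p,q) ∈ F` or for every
`x ∈ A_E(p,q)` either `(p,x) ∈ F` or there is `w ∈ A_P(p,x)` with `x ≼_j w` for some `j < i`. -/
def rel (G : GCR PP PE) : ℕ → PE → PP → Prop
  | 0, q, p => G.F p q
  | (i+1), q, p => G.F p q ∨
      ∀ x ∈ G.AE p q, G.F p x ∨ ∃ w ∈ G.AP p x, ∃ j, ∃ _ : j < i + 1, G.rel j x w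
  termination_by i _ _ => i
  decreasing_by omega

/-- The stabilized relation `≼`. -/
def Rel (G : GCR PP PE) (q : PE) (p : PP) : Prop := ∃ i, G.rel i q p

/-- A strategy for the Pursuer: an initial position together with a move for every
finite history of positions (most recent first). -/
structure PStrat (G : GCR PP PE) where
  init : PP
  move : List (PP × PE) → PP

/-- A strategy for the Evader: an initial position (depending on the Pursuer's choice)
together with a move for every finite history of positions (most recent first). -/
structure EStrat (G : GCR PP PE) where
  init : PP → PE
  move : List (PP × PE) → PE

/-- A Pursuer strategy plays allowed moves at every non-final position. -/
def PStrat.MovesValid {G : GCR PP PE} (σ : PStrat G) : Prop :=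
  ∀ (h : List (PP × PE)) (c : PP × PE), ¬ G.F c.1 c.2 → σ.move (c :: h) ∈ G.AP c.1 c.2

/-- An Evader strategy plays allowed moves at every non-final position. -/
def EStrat.MovesValid {G : GCR PP PE} (τ : EStrat G) : Prop :=
  ∀ (h : List (PP × PE)) (c : PP × PE), ¬ G.F c.1 c.2 → τ.move (c :: h) ∈ G.AE c.1 c.2

/-- A valid Pursuer strategy: the initial position is an allowed start position,
and all moves are allowed. -/
def PStrat.Valid {G : GCR PP PE} (σ : PStrat G) : Prop :=
  G.IP σ.init ∧ σ.MovesValid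

/-- A valid Evader strategy: the initial position is an allowed response to any allowed
Pursuer start position, and all moves are allowed. -/
def EStrat.Valid {G : GCR PP PE} (τ : EStrat G) : Prop :=
  (∀ p, G.IP p → G.IE p (τ.init p)) ∧ τ.MovesValid

/-- The play of the game determined by strategies `σ` and `τ`: first both players choose
their start positions, then they move alternately with the Pursuer moving first.
Returns the current position after `n` single moves together with the history so far. -/
def play (G : GCR PP PE) (σ : PStrat G) (τ : EStrat G) : ℕ → (PP × PE) × List (PP × PE)
  | 0 => ((σ.init, τ.init σ.init), [(σ.init, τ.init σ.init)])
  | (n+1) =>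
      let s := play G σ τ n
      let nxt := if n % 2 = 0 then (σ.move s.2, s.1.2) else (s.1.1, τ.move s.2)
      (nxt, nxt :: s.2)

/-- The position after `n` single moves of the play determined by `σ` and `τ`. -/
def pos (G : GCR PP PE) (σ : PStrat G) (τ : EStrat G) (n : ℕ) : PP × PE :=
  (play G σ τ n).1

/-- Play from a given mid-game position `start`; `pFirst = true` means the Pursuer is
next to move. The players move alternately. Returns the current position after `n`
single moves together with the history so far. -/
def playFrom (G : GCR PP PE) (σ : PStrat G) (τ : EStrat G) (start : PP × PE)
    (pFirst : Bool) : ℕ → (PP × PE) × List (PP × PE)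
  | 0 => (start, [start])
  | (n+1) =>
      let s := playFrom G σ τ start pFirst n
      let nxt := if (decide (n % 2 = 0)) == pFirst
        then (σ.move s.2, s.1.2) else (s.1.1, τ.move s.2)
      (nxt, nxt :: s.2)

/-- The position after `n` single moves of the play from state `(start, pFirst)`. -/
def posFrom (G : GCR PP PE) (σ : PStrat G) (τ : EStrat G) (start : PP × PE)
    (pFirst : Bool) (n : ℕ) : PP × PE :=
  (playFrom G σ τ start pFirst n).1

/-- The Pursuer has a winning strategy: a valid strategy such that against every valid
Evader strategy the position eventually belongs to `F`. -/
def PursuerWins (G : GCR PP PE) : Prop :=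
  ∃ σ : PStrat G, σ.Valid ∧ ∀ τ : EStrat G, τ.Valid →
    ∃ n, G.F (pos G σ τ n).1 (pos G σ τ n).2

/-- The Evader has a winning strategy: a valid strategy such that against every valid
Pursuer strategy the position never belongs to `F`. -/
def EvaderWins (G : GCR PP PE) : Prop :=
  ∃ τ : EStrat G, τ.Valid ∧ ∀ σ : PStrat G, σ.Valid →
    ∀ n, ¬ G.F (pos G σ τ n).1 (pos G σ τ n).2

/-! ### The state digraph and its labelling -/

/-- The initial labelling of the state digraph: final states get `0`, all others `∞`.
A state is a position together with a `Bool` which is `true` when the Pursuer is next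
to move. -/
noncomputable def labelInit (G : GCR PP PE) : (PP × PE) × Bool → ℕ∞ :=
  fun s => if G.F s.1.1 s.1.2 then 0 else ⊤

/-- One round of updates of the labelling procedure: a non-final Pursuer-to-move state
gets `1 +` the minimum label over its out-neighbours, and a non-final Evader-to-move
state gets `1 +` the maximum label over its out-neighbours. -/
noncomputable def labelStep (G : GCR PP PE) (f : (PP × PE) × Bool → ℕ∞) :
    (PP × PE) × Bool → ℕ∞ :=
  fun s =>
    if G.F s.1.1 s.1.2 then 0
    else if s.2 then 1 + ⨅ w ∈ G.AP s.1.1 s.1.2, f ((w, s.1.2), false)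
    else 1 + ⨆ x ∈ G.AE s.1.1 s.1.2, f ((s.1.1, x), true)

/-- The stable labelling of the state digraph, obtained by repeating the update
procedure until no label changes (the iterates decrease pointwise, so the stable
labelling is the pointwise infimum of the iterates). -/
noncomputable def label (G : GCR PP PE) (s : (PP × PE) × Bool) : ℕ∞ :=
  ⨅ n : ℕ, (G.labelStep)^[n] G.labelInit s

/-! ### Length of the game -/

/-- The number of moves the Pursuer makes before the position first lies in `F`, in the
play determined by `σ` and `τ` (the Pursuer moves at odd time-steps, so has made
`(n+1)/2` moves by time-step `n`); `⊤` if the position never lies in `F`. -/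
noncomputable def captureMoves (G : GCR PP PE) (σ : PStrat G) (τ : EStrat G) : ℕ∞ :=
  ⨅ (n : ℕ) (_ : G.F (pos G σ τ n).1 (pos G σ τ n).2), (((n + 1) / 2 : ℕ) : ℕ∞)

/-- The length of the game under optimal play: the minimum over valid Pursuer strategies
of the maximum over valid Evader strategies of the number of Pursuer moves made before
the position first lies in `F`. -/
noncomputable def gameLength (G : GCR PP PE) : ℕ∞ :=
  ⨅ (σ : PStrat G) (_ : σ.Valid), ⨆ (τ : EStrat G) (_ : τ.Valid), G.captureMoves σ τ

/-- The quantity `ℓ(p,q)` from Corollary 1. -/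
noncomputable def ell (G : GCR PP PE) (p : PP) (q : PE) : ℕ∞ :=
  if G.Rel q p then ⨅ (j : ℕ) (_ : G.rel j q p), (j : ℕ∞)
  else 1 + ⨆ w ∈ G.AP p q, ⨅ (j : ℕ) (_ : G.rel j q w), (j : ℕ∞)

/-! ### Position independent games -/

/-- A game is position independent (with position digraphs given by out-neighbour maps
`GP` and `GE`) if, from any non-final position, the allowed moves of the Pursuer depend
only on the Pursuer's position and the allowed moves of the Evader depend only on the
Evader's position. -/
def PositionIndependent (G : GCR PP PE) (GP : PP → Set PP) (GE : PE → Set PE) : Prop :=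
  ∀ p q, ¬ G.F p q → G.AP p q = GP p ∧ G.AE p q = GE q

/-- A vertex `(p,q)` of the round summary digraph is removable with respect to a set `S`
of vertices. -/
def Removable (G : GCR PP PE) (GP : PP → Set PP) (GE : PE → Set PE)
    (v : PP × PE) (S : Set (PP × PE)) : Prop :=
  G.F v.1 v.2 ∨ ∀ x ∈ GE v.2, G.F v.1 x ∨ ∃ y ∈ GP v.1, (y, x) ∈ S

/-- A removable vertex ordering of the round summary digraph: a sequence of vertices in
which each element is removable with respect to the set of vertices preceding it, and
there is a Pursuer start position `p ∈ I_P` such that for all `q ∈ I_E(p)` either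
`(p,q) ∈ F` or the Pursuer has an allowed move `w` with `(w,q)` in the sequence. -/
def RemovableOrdering (G : GCR PP PE) (GP : PP → Set PP) (GE : PE → Set PE)
    (L : List (PP × PE)) : Prop :=
  (∀ i : Fin L.length, G.Removable GP GE (L.get i)
      {w | ∃ j : Fin L.length, (j : ℕ) < (i : ℕ) ∧ L.get j = w}) ∧
  ∃ p, G.IP p ∧ ∀ q, G.IE p q → G.F p q ∨ ∃ w ∈ GP p, (w, q) ∈ L

/-!
The relation `q ≼_i w` says that the Pursuer, standing at `w` with the Evader at `q` and the
Evader to move, captures within `i` further rounds. If the condition holds, the Pursuer starts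
at `p` and always moves to some `w` with `q ≼_i w` for the least possible `i`; this least rank
strictly decreases every round, so the play reaches `F`. If the condition fails, the Evader
starts at a position from which no Pursuer move `w` satisfies `q ≼ w`. Since the relations
stabilize (finitely many Evader moves), `¬ q ≼ w` means the Evader has a move `x` after which
again no Pursuer move `w'` satisfies `x ≼ w'`, and such positions are never final.
-/

lemma rel_zero (G : GCR PP PE) (q : PE) (p : PP) : G.rel 0 q p ↔ G.F p q := by
  rw [rel]

lemma rel_succ (G : GCR PP PE) (i : ℕ) (q : PE) (p : PP) :
    G.rel (i + 1) q p ↔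
      (G.F p q ∨ ∀ x ∈ G.AE p q, G.F p x ∨
        ∃ w ∈ G.AP p x, ∃ j, ∃ _ : j < i + 1, G.rel j x w) := by
  rw [rel]

lemma not_final_of_not_rel {G : GCR PP PE} {q : PE} {p : PP} (h : ¬ G.Rel q p) : ¬ G.F p q :=
  fun hF => h ⟨0, (rel_zero G q p).2 hF⟩

/-- Positions, with the Pursuer to move, from which the Evader escapes forever. -/
def EvaderSafe (G : GCR PP PE) (c : PP × PE) : Prop :=
  ¬ G.F c.1 c.2 ∧ ∀ w ∈ G.AP c.1 c.2, ¬ G.Rel c.2 w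

lemma exists_evaderSafe_of_not_rel {G : GCR PP PE} {w : PP} {q : PE}
    (hfin : (G.AE w q).Finite) (h : ¬ G.Rel q w) :
    ∃ x ∈ G.AE w q, G.EvaderSafe (w, x) := by
  by_contra! hunsafe
  have hrank : ∀ x ∈ G.AE w q, ∃ j, G.F w x ∨ ∃ w' ∈ G.AP w x, G.rel j x w' := by
    intro x hx
    by_cases hFx : G.F w x
    · exact ⟨0, Or.inl hFx⟩
    · obtain ⟨w', hw', j, hj⟩ : ∃ w' ∈ G.AP w x, G.Rel x w' := by
        by_contra! hne
        exact hunsafe x hx ⟨hFx, hne⟩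
      exact ⟨j, Or.inr ⟨w', hw', hj⟩⟩
  choose! rank hrank using hrank
  obtain ⟨N, hN⟩ := (hfin.image rank).bddAbove
  refine h ⟨N + 1, (rel_succ G N q w).2 (Or.inr fun x hx => ?_)⟩
  refine (hrank x hx).imp_right fun ⟨w', hw', hr⟩ => ⟨w', hw', rank x, ?_, hr⟩
  exact Nat.lt_succ_of_le (hN ⟨x, hx, rfl⟩)

noncomputable def greedyMove (G : GCR PP PE) (c : PP × PE) : PP :=
  if h : ∃ i, ∃ w ∈ G.AP c.1 c.2, G.rel i c.2 w then (Nat.find_spec h).choose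
  else if hF : G.F c.1 c.2 then c.1 else (G.AP_nonempty c.1 c.2 hF).choose

lemma greedyMove_mem (G : GCR PP PE) {c : PP × PE} (hF : ¬ G.F c.1 c.2) :
    G.greedyMove c ∈ G.AP c.1 c.2 := by
  unfold greedyMove
  split_ifs with h
  · exact (Nat.find_spec h).choose_spec.1
  · exact (G.AP_nonempty c.1 c.2 hF).choose_spec

lemma exists_le_rel_greedyMove (G : GCR PP PE) {c : PP × PE} {w : PP} {i : ℕ}
    (hw : w ∈ G.AP c.1 c.2) (hi : G.rel i c.2 w) :
    ∃ j ≤ i, G.rel j c.2 (G.greedyMove c) := by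
  have h : ∃ i, ∃ w ∈ G.AP c.1 c.2, G.rel i c.2 w := ⟨i, w, hw, hi⟩
  refine ⟨Nat.find h, Nat.find_min' h ⟨w, hw, hi⟩, ?_⟩
  rw [greedyMove, dif_pos h]
  exact (Nat.find_spec h).choose_spec.2

lemma greedyMove_round (G : GCR PP PE) {c : PP × PE} {w : PP} {i : ℕ}
    (hw : w ∈ G.AP c.1 c.2) (hi : G.rel i c.2 w) :
    G.F (G.greedyMove c) c.2 ∨ ∀ x ∈ G.AE (G.greedyMove c) c.2, G.F (G.greedyMove c) x ∨
      ∃ w' ∈ G.AP (G.greedyMove c) x, ∃ k < i, G.rel k x w' := by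
  obtain ⟨j, hji, hj⟩ := G.exists_le_rel_greedyMove hw hi
  cases j with
  | zero => exact Or.inl ((rel_zero G _ _).1 hj)
  | succ j =>
    refine ((rel_succ G j _ _).1 hj).imp_right fun hstep x hx => ?_
    refine (hstep x hx).imp_right fun ⟨w', hw', k, hk, hr⟩ => ⟨w', hw', k, by omega, hr⟩

noncomputable def escapeMove (G : GCR PP PE) (c : PP × PE) : PE :=
  if h : ∃ x ∈ G.AE c.1 c.2, G.EvaderSafe (c.1, x) then h.choose
  else if hF : G.F c.1 c.2 then c.2 else (G.AE_nonempty c.1 c.2 hF).choose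

lemma escapeMove_mem (G : GCR PP PE) {c : PP × PE} (hF : ¬ G.F c.1 c.2) :
    G.escapeMove c ∈ G.AE c.1 c.2 := by
  unfold escapeMove
  split_ifs with h
  · exact h.choose_spec.1
  · exact (G.AE_nonempty c.1 c.2 hF).choose_spec

lemma evaderSafe_escapeMove (G : GCR PP PE) {c : PP × PE}
    (h : ∃ x ∈ G.AE c.1 c.2, G.EvaderSafe (c.1, x)) :
    G.EvaderSafe (c.1, G.escapeMove c) := by
  rw [escapeMove, dif_pos h]
  exact h.choose_spec.2

lemma evaderSafe_escapeMove_of_mem [Finite PE] (G : GCR PP PE) {c : PP × PE}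
    (hc : G.EvaderSafe c) {w : PP} (hw : w ∈ G.AP c.1 c.2) :
    G.EvaderSafe (w, G.escapeMove (w, c.2)) :=
  G.evaderSafe_escapeMove (c := (w, c.2))
    (exists_evaderSafe_of_not_rel (Set.toFinite _) (hc.2 w hw))

noncomputable def escapeInit (G : GCR PP PE) (p : PP) : PE :=
  if h : ∃ q, G.IE p q ∧ G.EvaderSafe (p, q) then h.choose
  else if hp : G.IP p then hp.choose else G.I_nonempty.choose_spec.choose

lemma escapeInit_mem (G : GCR PP PE) {p : PP} (hp : G.IP p) : G.IE p (G.escapeInit p) := by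
  unfold escapeInit
  split_ifs with h
  · exact h.choose_spec.1
  · exact hp.choose_spec

lemma evaderSafe_escapeInit (G : GCR PP PE) {p : PP} (h : ∃ q, G.IE p q ∧ G.EvaderSafe (p, q)) :
    G.EvaderSafe (p, G.escapeInit p) := by
  rw [escapeInit, dif_pos h]
  exact h.choose_spec.2

-- The empty history never occurs in a play, so the moves chosen for it are arbitrary.
noncomputable def greedyStrat (G : GCR PP PE) (p : PP) : PStrat G where
  init := p
  move
    | [] => p
    | c :: _ => G.greedyMove c

noncomputable def escapeStrat (G : GCR PP PE) : EStrat G where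
  init := G.escapeInit
  move
    | [] => G.escapeInit G.I_nonempty.choose
    | c :: _ => G.escapeMove c

lemma greedyStrat_movesValid (G : GCR PP PE) (p : PP) : (G.greedyStrat p).MovesValid :=
  fun _ _ hF => G.greedyMove_mem hF

lemma escapeStrat_valid (G : GCR PP PE) : G.escapeStrat.Valid :=
  ⟨fun _ hp => G.escapeInit_mem hp, fun _ _ hF => G.escapeMove_mem hF⟩

section Play

variable {G : GCR PP PE} {σ : PStrat G} {τ : EStrat G}

lemma play_snd_eq_cons (n : ℕ) : ∃ t, (play G σ τ n).2 = pos G σ τ n :: t := by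
  cases n with
  | zero => exact ⟨[], rfl⟩
  | succ n => exact ⟨(play G σ τ n).2, rfl⟩

lemma pos_two_mul_add_one (m : ℕ) :
    pos G σ τ (2 * m + 1) = (σ.move (play G σ τ (2 * m)).2, (pos G σ τ (2 * m)).2) := by
  simp [pos, play]

lemma pos_two_mul_add_two (m : ℕ) :
    pos G σ τ (2 * (m + 1)) =
      ((pos G σ τ (2 * m + 1)).1, τ.move (play G σ τ (2 * m + 1)).2) := by
  rw [show 2 * (m + 1) = 2 * m + 1 + 1 by ring]
  simp [pos, play, Nat.add_mod]

lemma PStrat.MovesValid.move_play_mem (hσ : σ.MovesValid) {n : ℕ}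
    (hF : ¬ G.F (pos G σ τ n).1 (pos G σ τ n).2) :
    σ.move (play G σ τ n).2 ∈ G.AP (pos G σ τ n).1 (pos G σ τ n).2 := by
  obtain ⟨t, ht⟩ := play_snd_eq_cons (σ := σ) (τ := τ) n
  rw [ht]
  exact hσ t _ hF

lemma EStrat.MovesValid.move_play_mem (hτ : τ.MovesValid) {n : ℕ}
    (hF : ¬ G.F (pos G σ τ n).1 (pos G σ τ n).2) :
    τ.move (play G σ τ n).2 ∈ G.AE (pos G σ τ n).1 (pos G σ τ n).2 := by
  obtain ⟨t, ht⟩ := play_snd_eq_cons (σ := σ) (τ := τ) n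
  rw [ht]
  exact hτ t _ hF

end Play

lemma greedyStrat_move_play (G : GCR PP PE) (p : PP) (τ : EStrat G) (n : ℕ) :
    (G.greedyStrat p).move (play G (G.greedyStrat p) τ n).2 =
      G.greedyMove (pos G (G.greedyStrat p) τ n) := by
  obtain ⟨t, ht⟩ := play_snd_eq_cons (σ := G.greedyStrat p) (τ := τ) n
  rw [ht]
  rfl

lemma escapeStrat_move_play (G : GCR PP PE) (σ : PStrat G) (n : ℕ) :
    G.escapeStrat.move (play G σ G.escapeStrat n).2 = G.escapeMove (pos G σ G.escapeStrat n) := by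
  obtain ⟨t, ht⟩ := play_snd_eq_cons (σ := σ) (τ := G.escapeStrat) n
  rw [ht]
  rfl

lemma greedyStrat_captures (G : GCR PP PE) {p : PP} {τ : EStrat G} (hτ : τ.MovesValid)
    (i m : ℕ) (h : ∃ w ∈ G.AP (pos G (G.greedyStrat p) τ (2 * m)).1
      (pos G (G.greedyStrat p) τ (2 * m)).2, G.rel i (pos G (G.greedyStrat p) τ (2 * m)).2 w) :
    ∃ n, G.F (pos G (G.greedyStrat p) τ n).1 (pos G (G.greedyStrat p) τ n).2 := by
  induction i using Nat.strong_induction_on generalizing m with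
  | _ i ih =>
  by_contra! hnever
  set c := pos G (G.greedyStrat p) τ (2 * m)
  obtain ⟨w, hw, hi⟩ := h
  have hpos₁ : pos G (G.greedyStrat p) τ (2 * m + 1) = (G.greedyMove c, c.2) := by
    rw [pos_two_mul_add_one, greedyStrat_move_play]
  have hx := hτ.move_play_mem (hnever (2 * m + 1))
  have hpos₂ : pos G (G.greedyStrat p) τ (2 * (m + 1)) =
      (G.greedyMove c, τ.move (play G (G.greedyStrat p) τ (2 * m + 1)).2) := by
    rw [pos_two_mul_add_two, hpos₁]
  rw [hpos₁] at hx
  rcases G.greedyMove_round hw hi with hF₁ | hstep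
  · exact hnever (2 * m + 1) (by rwa [hpos₁])
  rcases hstep _ hx with hF₂ | ⟨w', hw', k, hk, hr⟩
  · exact hnever (2 * (m + 1)) (by rwa [hpos₂])
  · obtain ⟨n, hn⟩ := ih k hk (m + 1) (by rw [hpos₂]; exact ⟨w', hw', hr⟩)
    exact hnever n hn

lemma not_rel_pos_two_mul_add_one {G : GCR PP PE} {σ : PStrat G} {τ : EStrat G}
    (hσ : σ.MovesValid) {m : ℕ} (h : G.EvaderSafe (pos G σ τ (2 * m))) :
    ¬ G.Rel (pos G σ τ (2 * m + 1)).2 (pos G σ τ (2 * m + 1)).1 := by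
  rw [pos_two_mul_add_one]
  exact h.2 _ (hσ.move_play_mem h.1)

lemma escapeStrat_evaderSafe [Finite PE] (G : GCR PP PE) {σ : PStrat G} (hσ : σ.MovesValid)
    (h₀ : G.EvaderSafe (pos G σ G.escapeStrat 0)) (m : ℕ) :
    G.EvaderSafe (pos G σ G.escapeStrat (2 * m)) := by
  induction m with
  | zero => exact h₀
  | succ m ih =>
    rw [pos_two_mul_add_two, escapeStrat_move_play, pos_two_mul_add_one]
    exact G.evaderSafe_escapeMove_of_mem ih (hσ.move_play_mem ih.1)

lemma escapeStrat_not_final [Finite PE] (G : GCR PP PE) {σ : PStrat G} (hσ : σ.MovesValid)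
    (h₀ : G.EvaderSafe (pos G σ G.escapeStrat 0)) (n : ℕ) :
    ¬ G.F (pos G σ G.escapeStrat n).1 (pos G σ G.escapeStrat n).2 := by
  obtain ⟨m, rfl | rfl⟩ := Nat.even_or_odd' n
  · exact (G.escapeStrat_evaderSafe hσ h₀ m).1
  · exact not_final_of_not_rel
      (not_rel_pos_two_mul_add_one hσ (G.escapeStrat_evaderSafe hσ h₀ m))

theorem pursuerWins_iff_general [Fintype PE] (G : GCR PP PE) :
    G.PursuerWins ↔
      ∃ p, G.IP p ∧ ∀ q, G.IE p q → (G.F p q ∨ ∃ w ∈ G.AP p q, G.Rel q w) := by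
  constructor
  · rintro ⟨σ, ⟨hσ₀, hσ⟩, hwins⟩
    by_contra! hsafe
    obtain ⟨n, hn⟩ := hwins G.escapeStrat G.escapeStrat_valid
    exact G.escapeStrat_not_final hσ (G.evaderSafe_escapeInit (hsafe σ.init hσ₀)) n hn
  · rintro ⟨p, hp, hcapture⟩
    refine ⟨G.greedyStrat p, ⟨hp, G.greedyStrat_movesValid p⟩, fun τ hτ => ?_⟩
    rcases hcapture (τ.init p) (hτ.1 p hp) with hF | ⟨w, hw, i, hi⟩
    · exact ⟨0, hF⟩
    · exact G.greedyStrat_captures hτ.2 i 0 ⟨w, hw, hi⟩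

/-- Theorem 1: the Pursuer has a winning strategy if and only if there is a start
position `p ∈ I_P` such that for every `q ∈ I_E(p)` either `(p,q) ∈ F` or there is
`w ∈ A_P(p,q)` with `q ≼ w`. -/
theorem pursuerWins_iff [Fintype PP] [Fintype PE] (G : GCR PP PE) :
    G.PursuerWins ↔
      ∃ p, G.IP p ∧ ∀ q, G.IE p q → (G.F p q ∨ ∃ w ∈ G.AP p q, G.Rel q w) :=
  pursuerWins_iff_general G

end GCR
end

section
/- Let G be a generalized Cops and Robbers game. If q_E ≼_n p_P for some natural number n, then the stable label of the state ((p_P, q_E), E) in the state digraph D_G is a natural number (i.e., is finite). -/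
open Classical

namespace GCR

variable {PP PE : Type*}

/-! By induction on `n`, the `2n`-th iterate of the update is at most `2n` at `((p,q),E)`:
every Evader move `x` is answered by the witness `w` of `x ≼_j w`, and the two updates for
these moves add `2` to the bound `2j` at `((w,x),E)`. The iterates decrease, so the stable
label, their infimum, is at most `2n` as well. -/

lemma labelStep_mono (G : GCR PP PE) : Monotone G.labelStep := by
  intro f g hfg s
  simp only [labelStep]
  split_ifs
  · exact le_rfl
  all_goals gcongr; exact hfg _

lemma labelStep_labelInit_le (G : GCR PP PE) : G.labelStep G.labelInit ≤ G.labelInit := by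
  intro s
  unfold labelStep labelInit
  split_ifs <;> simp

lemma antitone_iterate_labelStep (G : GCR PP PE) :
    Antitone fun m => G.labelStep^[m] G.labelInit :=
  antitone_nat_of_succ_le fun m => by
    rw [Function.iterate_succ_apply]
    exact G.labelStep_mono.iterate m G.labelStep_labelInit_le

lemma iterate_labelStep_of_final (G : GCR PP PE) {s : (PP × PE) × Bool}
    (hF : G.F s.1.1 s.1.2) (m : ℕ) : G.labelStep^[m] G.labelInit s = 0 := by
  cases m with
  | zero => simp [labelInit, hF]
  | succ m => simp [Function.iterate_succ_apply', labelStep, hF]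

lemma labelStep_evader_le (G : GCR PP PE) (f : (PP × PE) × Bool → ℕ∞) {p : PP} {q : PE}
    {k : ℕ∞} (h : ∀ x ∈ G.AE p q, f ((p, x), true) ≤ k) :
    G.labelStep f ((p, q), false) ≤ 1 + k := by
  simp only [labelStep, Bool.false_eq_true, if_false]
  split_ifs
  · exact zero_le
  · gcongr
    exact iSup₂_le h

lemma labelStep_pursuer_le (G : GCR PP PE) (f : (PP × PE) × Bool → ℕ∞) {p w : PP} {x : PE}
    (hw : w ∈ G.AP p x) : G.labelStep f ((p, x), true) ≤ 1 + f ((w, x), false) := by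
  simp only [labelStep, if_true]
  split_ifs
  · exact zero_le
  · gcongr
    exact biInf_le _ hw

lemma iterate_labelStep_le_of_rel (G : GCR PP PE) (n : ℕ) {p : PP} {q : PE}
    (h : G.rel n q p) : G.labelStep^[2 * n] G.labelInit ((p, q), false) ≤ (2 * n : ℕ) := by
  induction n using Nat.strong_induction_on generalizing p q with
  | _ n ih =>
  by_cases hF : G.F p q
  · rw [G.iterate_labelStep_of_final hF]
    exact zero_le
  rcases n with _ | n
  · rw [rel] at h
    exact absurd h hF
  rw [rel] at h
  have hstep :
      G.labelStep^[2 * (n + 1)] G.labelInit ((p, q), false) ≤ 1 + (1 + (2 * n : ℕ)) := by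
    rw [show 2 * (n + 1) = 2 * n + 1 + 1 by ring, Function.iterate_succ_apply']
    refine G.labelStep_evader_le _ fun x hx => ?_
    rcases h.resolve_left hF x hx with hFx | ⟨w, hw, j, hj, hjxw⟩
    · rw [G.iterate_labelStep_of_final hFx]
      exact zero_le
    rw [Function.iterate_succ_apply']
    refine (G.labelStep_pursuer_le _ hw).trans ?_
    gcongr
    calc G.labelStep^[2 * n] G.labelInit ((w, x), false)
        ≤ G.labelStep^[2 * j] G.labelInit ((w, x), false) :=
          G.antitone_iterate_labelStep (by omega) _
      _ ≤ (2 * j : ℕ) := ih j hj hjxw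
      _ ≤ (2 * n : ℕ) := by exact_mod_cast (by omega : 2 * j ≤ 2 * n)
  refine hstep.trans (le_of_eq ?_)
  push_cast
  ring

theorem label_finite_of_rel_general (G : GCR PP PE)
    (p : PP) (q : PE) (n : ℕ) (h : G.rel n q p) :
    ∃ k : ℕ, G.label ((p, q), false) = (k : ℕ∞) := by
  have hle : G.label ((p, q), false) ≤ (2 * n : ℕ) :=
    (iInf_le _ (2 * n)).trans (G.iterate_labelStep_le_of_rel n h)
  obtain ⟨k, hk⟩ := ENat.ne_top_iff_exists.mp (ne_top_of_le_ne_top (ENat.natCast_ne_top _) hle)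
  exact ⟨k, hk.symm⟩

/-- If `q ≼_n p` for some natural number `n`, then the stable label of the
Evader-to-move state `((p,q),E)` in the state digraph is finite. -/
theorem label_finite_of_rel [Fintype PP] [Fintype PE] (G : GCR PP PE)
    (p : PP) (q : PE) (n : ℕ) (h : G.rel n q p) :
    ∃ k : ℕ, G.label ((p, q), false) = (k : ℕ∞) :=
  label_finite_of_rel_general G p q n h

end GCR
end
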